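/- For a centered Gaussian variable N ~ N(0,1), for every nonnegative integer m and a > 0, the m-th directional derivative formula holds: for u, x ∈ ℝ^d, D^mφ_a(u)·x^{⊗m} = φ_a(u) ∑_{ℓ=0}^{[m/2]} c_{m,ℓ} a^{-2ℓ} ‖x‖₂^{2ℓ} ( ⟨u,x⟩/a² )^{m-2ℓ}, where φ_a is the N(0,a²I_d) density and the coefficients satisfy: c_{m,0} = (-1)^m for all m ≥ 0; c_{2,1} = -1; c_{m+1,ℓ} = (m - 2ℓ + 2) c_{m,ℓ-1} - c_{m,ℓ} for 1 ≤ ℓ ≤ [m/2], m ≥ 2; c_{m+1,[(m+1)/2]} = c_{m,[m/2]} if m is odd and c_{m+1,[(m+1)/2]} = c_{m+1,[m/2]} if m is even. -/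

import Mathlib

/-!
Along the direction `x`, the density satisfies `∂ₓφ_a = -t φ_a` with `t(u) = ⟨u,x⟩/a²`, and
`∂ₓt = G := ‖x‖²/a²` is constant. Hence `∂ₓ^m φ_a = φ_a · P_m(G, t)` where `P_0 = 1` and
`P_{m+1} = -t P_m + G ∂_t P_m`, a rescaled Hermite recurrence; reading off coefficients of
`P_m = ∑_ℓ c_{m,ℓ} G^ℓ t^{m-2ℓ}` gives the recursion for `c_{m,ℓ}`.
-/

/-- The density of the `N(0, a² I_d)` law on `ℝ^d`. -/
noncomputable def gaussianDensity (d : ℕ) (a : ℝ) (u : EuclideanSpace ℝ (Fin d)) : ℝ :=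
  (2 * Real.pi * a ^ 2) ^ (-(d : ℝ) / 2) * Real.exp (-‖u‖ ^ 2 / (2 * a ^ 2))

open Finset

theorem iteratedFDeriv_succ_apply_const {𝕜 E F : Type*} [NontriviallyNormedField 𝕜]
    [NormedAddCommGroup E] [NormedSpace 𝕜 E] [NormedAddCommGroup F] [NormedSpace 𝕜 F]
    {f : E → F} {n : ℕ} {u : E} (hf : DifferentiableAt 𝕜 (iteratedFDeriv 𝕜 n f) u) (x : E) :
    iteratedFDeriv 𝕜 (n + 1) f u (fun _ => x) =
      fderiv 𝕜 (fun y => iteratedFDeriv 𝕜 n f y (fun _ => x)) u x := by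
  rw [iteratedFDeriv_succ_apply_left, fderiv_continuousMultilinear_apply_const_apply hf]
  rfl

noncomputable def gaussianDerivCoeff : ℕ → ℕ → ℝ
  | 0, 0 => 1
  | 0, _ + 1 => 0
  | m + 1, 0 => -gaussianDerivCoeff m 0
  | m + 1, ℓ + 1 => ((m : ℝ) - 2 * ℓ) * gaussianDerivCoeff m ℓ - gaussianDerivCoeff m (ℓ + 1)

namespace gaussianDerivCoeff

theorem succ_zero (m : ℕ) : gaussianDerivCoeff (m + 1) 0 = -gaussianDerivCoeff m 0 := rfl

theorem succ_succ (m ℓ : ℕ) : gaussianDerivCoeff (m + 1) (ℓ + 1) =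
    ((m : ℝ) - 2 * ℓ) * gaussianDerivCoeff m ℓ - gaussianDerivCoeff m (ℓ + 1) := rfl

theorem zero_right (m : ℕ) : gaussianDerivCoeff m 0 = (-1) ^ m := by
  induction m with
  | zero => rfl
  | succ m ih => rw [succ_zero, ih, pow_succ, mul_neg_one]

theorem eq_zero_of_lt {m ℓ : ℕ} (h : m < 2 * ℓ) : gaussianDerivCoeff m ℓ = 0 := by
  induction m generalizing ℓ with
  | zero =>
    obtain ⟨ℓ, rfl⟩ := Nat.exists_eq_succ_of_ne_zero (by omega : ℓ ≠ 0)
    rfl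
  | succ m ih =>
    obtain ⟨ℓ, rfl⟩ := Nat.exists_eq_succ_of_ne_zero (by omega : ℓ ≠ 0)
    rw [succ_succ, ih (by omega : m < 2 * (ℓ + 1))]
    rcases Nat.lt_or_ge m (2 * ℓ) with hm | hm
    · rw [ih hm]; ring
    · rw [show m = 2 * ℓ by omega]; push_cast; ring

end gaussianDerivCoeff

noncomputable def gaussianDerivPoly (m : ℕ) (G t : ℝ) : ℝ :=
  ∑ ℓ ∈ range (m / 2 + 1), gaussianDerivCoeff m ℓ * G ^ ℓ * t ^ (m - 2 * ℓ)

namespace gaussianDerivPoly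

theorem eq_sum_range {m N : ℕ} (hN : m / 2 < N) (G t : ℝ) :
    gaussianDerivPoly m G t = ∑ ℓ ∈ range N, gaussianDerivCoeff m ℓ * G ^ ℓ * t ^ (m - 2 * ℓ) :=
  sum_subset (range_subset_range.2 hN) fun ℓ _ hℓ => by
    rw [gaussianDerivCoeff.eq_zero_of_lt (by simp at hℓ; omega), zero_mul, zero_mul]

theorem hasDerivAt (m : ℕ) (G t : ℝ) :
    HasDerivAt (gaussianDerivPoly m G)
      (∑ ℓ ∈ range (m / 2 + 1),
        gaussianDerivCoeff m ℓ * G ^ ℓ * ((m - 2 * ℓ : ℕ) * t ^ (m - 2 * ℓ - 1))) t := by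
  unfold gaussianDerivPoly
  exact HasDerivAt.fun_sum fun ℓ _ => (hasDerivAt_pow _ t).const_mul _

theorem succ (m : ℕ) (G t : ℝ) :
    gaussianDerivPoly (m + 1) G t =
      -t * gaussianDerivPoly m G t + G * deriv (gaussianDerivPoly m G) t := by
  have hterm : ∀ ℓ ∈ range (m / 2 + 1),
      gaussianDerivCoeff (m + 1) (ℓ + 1) * G ^ (ℓ + 1) * t ^ (m + 1 - 2 * (ℓ + 1)) =
        -t * (gaussianDerivCoeff m (ℓ + 1) * G ^ (ℓ + 1) * t ^ (m - 2 * (ℓ + 1))) +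
          G * (gaussianDerivCoeff m ℓ * G ^ ℓ * ((m - 2 * ℓ : ℕ) * t ^ (m - 2 * ℓ - 1))) := by
    intro ℓ hℓ
    have h2ℓ : 2 * ℓ ≤ m := by simp at hℓ; omega
    -- when `t ^ (m - 2 * (ℓ + 1))` is a truncated power, its coefficient vanishes
    have hpow : t * t ^ (m - 2 * (ℓ + 1)) * gaussianDerivCoeff m (ℓ + 1) =
        t ^ (m - 2 * ℓ - 1) * gaussianDerivCoeff m (ℓ + 1) := by
      rcases le_or_gt (2 * (ℓ + 1)) m with h | h
      · rw [← pow_succ', show m - 2 * (ℓ + 1) + 1 = m - 2 * ℓ - 1 by omega]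
      · rw [gaussianDerivCoeff.eq_zero_of_lt h, mul_zero, mul_zero]
    rw [gaussianDerivCoeff.succ_succ, Nat.cast_sub h2ℓ,
      show m + 1 - 2 * (ℓ + 1) = m - 2 * ℓ - 1 by omega]
    push_cast
    linear_combination G ^ (ℓ + 1) * hpow
  rw [(hasDerivAt m G t).deriv, eq_sum_range (N := m / 2 + 2) (by omega),
    eq_sum_range (m := m) (N := m / 2 + 2) (by omega), sum_range_succ' _ (m / 2 + 1),
    sum_range_succ' _ (m / 2 + 1), sum_congr rfl hterm, sum_add_distrib, gaussianDerivCoeff.succ_zero, mul_add, mul_sum, mul_sum]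
  simp only [mul_zero, Nat.sub_zero]
  ring

theorem differentiable (m : ℕ) (G : ℝ) : Differentiable ℝ (gaussianDerivPoly m G) :=
  fun t => (hasDerivAt m G t).differentiableAt

end gaussianDerivPoly

section Density

variable {d : ℕ} {a : ℝ}

theorem contDiff_gaussianDensity : ContDiff ℝ ⊤ (gaussianDensity d a) :=
  contDiff_const.mul ((contDiff_norm_sq ℝ).neg.div_const _).exp

theorem hasFDerivAt_gaussianDensity (u : EuclideanSpace ℝ (Fin d)) :
    HasFDerivAt (gaussianDensity d a) (-(gaussianDensity d a u / a ^ 2) • innerSL ℝ u) u := by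
  have hq : HasDerivAt (fun r : ℝ => -r / (2 * a ^ 2)) (-1 / (2 * a ^ 2)) (‖u‖ ^ 2) :=
    (hasDerivAt_neg _).div_const _
  have h := ((hq.comp_hasFDerivAt u (hasStrictFDerivAt_norm_sq u).hasFDerivAt).exp.const_mul
    ((2 * Real.pi * a ^ 2) ^ (-(d : ℝ) / 2)))
  refine h.congr_fderiv (ContinuousLinearMap.ext fun x => ?_)
  simp only [gaussianDensity, Function.comp_apply, smul_apply, neg_apply, coe_innerSL_apply,
    nsmul_eq_mul, smul_eq_mul, neg_smul]
  ring

theorem iteratedFDeriv_gaussianDensity_apply_const (m : ℕ) (u x : EuclideanSpace ℝ (Fin d)) :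
    iteratedFDeriv ℝ m (gaussianDensity d a) u (fun _ => x) =
      gaussianDensity d a u * gaussianDerivPoly m (‖x‖ ^ 2 / a ^ 2) (inner ℝ u x / a ^ 2) := by
  induction m generalizing u with
  | zero => simp [gaussianDerivPoly, gaussianDerivCoeff]
  | succ m ih =>
    have hdiff : DifferentiableAt ℝ (iteratedFDeriv ℝ m (gaussianDensity d a)) u :=
      contDiff_gaussianDensity.differentiable_iteratedFDeriv (by simp) u
    have ht : HasFDerivAt (fun y => inner ℝ y x / a ^ 2) ((a ^ 2)⁻¹ • innerSL ℝ x) u := by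
      convert ((a ^ 2)⁻¹ • innerSL ℝ x).hasFDerivAt using 1
      ext y
      simp [real_inner_comm, div_eq_inv_mul]
    have hP : HasFDerivAt (fun y => gaussianDerivPoly m (‖x‖ ^ 2 / a ^ 2) (inner ℝ y x / a ^ 2))
        _ u :=
      (gaussianDerivPoly.differentiable m _ _).hasDerivAt.comp_hasFDerivAt u ht
    rw [iteratedFDeriv_succ_apply_const hdiff, funext ih,
      ((hasFDerivAt_gaussianDensity u).fun_mul hP).fderiv, gaussianDerivPoly.succ]
    simp only [add_apply, smul_apply, coe_innerSL_apply, real_inner_self_eq_norm_sq, smul_eq_mul]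
    ring

end Density

/-- the explicit directional-derivative formula for the isotropic Gaussian
density: there are coefficients `c_{m,ℓ}` satisfying the stated recurrence relations such that
`D^mφ_a(u)·x^{⊗m} = φ_a(u) ∑_{ℓ=0}^{[m/2]} c_{m,ℓ} a^{-2ℓ} ‖x‖₂^{2ℓ} (⟨u,x⟩/a²)^{m-2ℓ}`. -/
theorem gaussian_directional_derivative_formula :
    ∃ c : ℕ → ℕ → ℝ,
      (∀ m : ℕ, c m 0 = (-1 : ℝ) ^ m) ∧
      c 2 1 = -1 ∧
      (∀ m : ℕ, 2 ≤ m → ∀ ℓ : ℕ, 1 ≤ ℓ → ℓ ≤ m / 2 →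
        c (m + 1) ℓ = ((m : ℝ) - 2 * ℓ + 2) * c m (ℓ - 1) - c m ℓ) ∧
      (∀ m : ℕ, Odd m → c (m + 1) ((m + 1) / 2) = c m (m / 2)) ∧
      (∀ m : ℕ, Even m → 2 ≤ m → c (m + 1) ((m + 1) / 2) = c (m + 1) (m / 2)) ∧
      ∀ (d : ℕ) (a : ℝ), 0 < a → ∀ (m : ℕ) (u x : EuclideanSpace ℝ (Fin d)),
        iteratedFDeriv ℝ m (gaussianDensity d a) u (fun _ => x) =
          gaussianDensity d a u * ∑ ℓ ∈ Finset.range (m / 2 + 1),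
            c m ℓ * a ^ (-(2 * ℓ : ℤ)) * ‖x‖ ^ (2 * ℓ) *
              ((inner ℝ u x : ℝ) / a ^ 2) ^ (m - 2 * ℓ) := by
  refine ⟨gaussianDerivCoeff, gaussianDerivCoeff.zero_right, ?_, ?_, ?_, ?_, ?_⟩
  · norm_num [gaussianDerivCoeff]
  · intro m _ ℓ hℓ _
    obtain ⟨k, rfl⟩ := Nat.exists_eq_add_of_le' hℓ
    rw [gaussianDerivCoeff.succ_succ, Nat.add_sub_cancel]
    push_cast
    ring
  · rintro m ⟨k, rfl⟩
    rw [show (2 * k + 1 + 1) / 2 = k + 1 by omega, show (2 * k + 1) / 2 = k by omega,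
      gaussianDerivCoeff.succ_succ, gaussianDerivCoeff.eq_zero_of_lt (ℓ := k + 1) (by omega)]
    push_cast
    ring
  · rintro m ⟨k, rfl⟩ -
    rw [show (k + k + 1) / 2 = (k + k) / 2 by omega]
  · intro d a _ m u x
    rw [iteratedFDeriv_gaussianDensity_apply_const, gaussianDerivPoly]
    congr 1
    refine sum_congr rfl fun ℓ _ => ?_
    rw [zpow_neg, show (2 * ℓ : ℤ) = ((2 * ℓ : ℕ) : ℤ) by push_cast; rfl, zpow_natCast,
      div_pow, ← pow_mul, ← pow_mul]
    ring
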